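/- arXiv:1610.06445 — 5 statements merged into one kernel-verified Lean document; each statement's English description precedes it below -/
import Mathlib

section
/- Let n ≥ 1 and p ≥ 1. For every nonzero ξ ∈ ℝ^{4n}, the first-order symbol map σ_0^{(p)}(ξ) : ⊙^p ℂ² → Λ^1 ℂ^{2n} ⊗ ⊙^{p−1} ℂ², given by (σ_0^{(p)}(ξ)ϑ)(A₀; A'₂,…,A'_p) = ∑_{A'∈{0,1}} ξ_{A₀}{}^{A'} ϑ(A', A'₂,…,A'_p), is injective. -/
/-!
For `j = 0` the symbol is `(σϑ)(A; B) = ∑_{A'} ξ_A{}^{A'} ϑ(A', B)`. Rows `2l` and `2l + 1` of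
`(ξ_A{}^{A'})` form a `2 × 2` matrix whose determinant is `ξ_{4l+1}² + ⋯ + ξ_{4l+4}²`, which is
nonzero for the block containing a nonzero coordinate of `ξ`; so `σϑ = 0` forces `ϑ(·, B) = 0`.
-/

noncomputable section

/-- The complex `2n × 2` matrix `(ξ_{AA'})` associated to `ξ ∈ ℝ^{4n}`:
row `2l` is `(ξ_{4l+1} + i ξ_{4l+2}, −ξ_{4l+3} − i ξ_{4l+4})` and row `2l+1` is
`(ξ_{4l+3} − i ξ_{4l+4}, ξ_{4l+1} − i ξ_{4l+2})` (using 1-based names, 0-based indices). -/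
def xiMat (n : ℕ) (ξ : Fin (4 * n) → ℝ) : Matrix (Fin (2 * n)) (Fin 2) ℂ :=
  Matrix.of fun A A' =>
    if A.val % 2 = 0 then
      (if A'.val = 0 then
        (⟨ξ ⟨4 * (A.val / 2), by have := A.isLt; omega⟩,
          ξ ⟨4 * (A.val / 2) + 1, by have := A.isLt; omega⟩⟩ : ℂ)
      else
        (⟨-ξ ⟨4 * (A.val / 2) + 2, by have := A.isLt; omega⟩,
          -ξ ⟨4 * (A.val / 2) + 3, by have := A.isLt; omega⟩⟩ : ℂ))
    else
      (if A'.val = 0 then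
        (⟨ξ ⟨4 * (A.val / 2) + 2, by have := A.isLt; omega⟩,
          -ξ ⟨4 * (A.val / 2) + 3, by have := A.isLt; omega⟩⟩ : ℂ)
      else
        (⟨ξ ⟨4 * (A.val / 2), by have := A.isLt; omega⟩,
          -ξ ⟨4 * (A.val / 2) + 1, by have := A.isLt; omega⟩⟩ : ℂ))

/-- The raised epsilon symbol on primed indices: `ε^{01} = −1`, `ε^{10} = 1`. -/
def epsUp (a b : Fin 2) : ℂ :=
  if a.val = 0 ∧ b.val = 1 then -1 else if a.val = 1 ∧ b.val = 0 then 1 else 0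

/-- `ξ_A{}^{A'} = ∑_{B'} ξ_{AB'} ε^{B'A'}`. -/
def xiUp (n : ℕ) (ξ : Fin (4 * n) → ℝ) (A : Fin (2 * n)) (A' : Fin 2) : ℂ :=
  ∑ B' : Fin 2, xiMat n ξ A B' * epsUp B' A'

/-- Membership in `Λ^q ℂ^{2n} ⊗ ⊙^p ℂ²`: totally antisymmetric in the `q` unprimed
arguments and totally symmetric in the `p` primed arguments. -/
def IsAltSym (n q p : ℕ) (ϑ : (Fin q → Fin (2 * n)) → (Fin p → Fin 2) → ℂ) : Prop :=
  (∀ (σ : Equiv.Perm (Fin q)) (a : Fin q → Fin (2 * n)) (b : Fin p → Fin 2),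
      ϑ (a ∘ σ) b = ((Equiv.Perm.sign σ : ℤ) : ℂ) * ϑ a b) ∧
  (∀ (σ : Equiv.Perm (Fin p)) (a : Fin q → Fin (2 * n)) (b : Fin p → Fin 2),
      ϑ a (b ∘ σ) = ϑ a b)

/-- The first-order symbol map
`σ_j^{(p+1)}(ξ) : Λ^j ℂ^{2n} ⊗ ⊙^{p+1} ℂ² → Λ^{j+1} ℂ^{2n} ⊗ ⊙^{p} ℂ²`,
`(σϑ)(A₀,…,A_j; B) = (1/(j+1)) ∑_s (−1)^s ∑_{a} ξ_{A_s}{}^{a} ϑ(A₀,…,Â_s,…,A_j; a, B)`. -/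
def symb (n j p : ℕ) (ξ : Fin (4 * n) → ℝ)
    (ϑ : (Fin j → Fin (2 * n)) → (Fin (p + 1) → Fin 2) → ℂ) :
    (Fin (j + 1) → Fin (2 * n)) → (Fin p → Fin 2) → ℂ :=
  fun A B => ((j + 1 : ℕ) : ℂ)⁻¹ * ∑ s : Fin (j + 1), (-1 : ℂ) ^ (s : ℕ) *
    ∑ a : Fin 2, xiUp n ξ (A s) a * ϑ (A ∘ s.succAbove) (Fin.cons a B)

lemma symb_sub (n j p : ℕ) (ξ : Fin (4 * n) → ℝ)
    (ϑ₁ ϑ₂ : (Fin j → Fin (2 * n)) → (Fin (p + 1) → Fin 2) → ℂ) :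
    symb n j p ξ (ϑ₁ - ϑ₂) = symb n j p ξ ϑ₁ - symb n j p ξ ϑ₂ := by
  funext A B
  simp only [symb, Pi.sub_apply, mul_sub, Finset.sum_sub_distrib]

lemma symb_zero_apply (n p : ℕ) (ξ : Fin (4 * n) → ℝ)
    (ϑ : (Fin 0 → Fin (2 * n)) → (Fin (p + 1) → Fin 2) → ℂ)
    (A : Fin 1 → Fin (2 * n)) (B : Fin p → Fin 2) :
    symb n 0 p ξ ϑ A B = ∑ a, xiUp n ξ (A 0) a * ϑ ![] (Fin.cons a B) := by
  simp [symb, Subsingleton.elim _ ![]]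

def xiBlock (n : ℕ) (ξ : Fin (4 * n) → ℝ) (l : Fin n) : Matrix (Fin 2) (Fin 2) ℂ :=
  Matrix.of fun r a => xiUp n ξ ⟨2 * l + r, by omega⟩ a

lemma det_xiBlock (n : ℕ) (ξ : Fin (4 * n) → ℝ) (l : Fin n) :
    (xiBlock n ξ l).det = ((∑ k : Fin 4, ξ ⟨4 * l + k, by omega⟩ ^ 2 : ℝ) : ℂ) := by
  rw [Matrix.det_fin_two]
  have hdiv : (2 * (l : ℕ) + 1) / 2 = l := by omega
  apply Complex.ext <;>
    simp [xiBlock, xiUp, epsUp, xiMat, Fin.sum_univ_two, Fin.sum_univ_four, hdiv, pow_two] <;>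
    ring

lemma det_xiBlock_ne_zero (n : ℕ) (ξ : Fin (4 * n) → ℝ) (i : Fin (4 * n)) (hi : ξ i ≠ 0) :
    (xiBlock n ξ ⟨i / 4, by omega⟩).det ≠ 0 := by
  rw [det_xiBlock, Complex.ofReal_ne_zero]
  refine (Finset.sum_eq_zero_iff_of_nonneg fun _ _ => sq_nonneg _).not.mpr ?_
  push Not
  refine ⟨⟨i % 4, by omega⟩, Finset.mem_univ _, pow_ne_zero 2 ?_⟩
  convert hi using 2
  ext
  simp [Nat.div_add_mod]

lemma eq_zero_of_symb_zero_eq_zero (n p : ℕ) (ξ : Fin (4 * n) → ℝ) (hξ : ξ ≠ 0)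
    (ϑ : (Fin 0 → Fin (2 * n)) → (Fin (p + 1) → Fin 2) → ℂ) (h : symb n 0 p ξ ϑ = 0) :
    ϑ = 0 := by
  obtain ⟨i, hi⟩ := Function.ne_iff.mp hξ
  funext f b
  rw [Subsingleton.elim f ![], ← Fin.cons_self_tail b]
  have hker :
      (xiBlock n ξ ⟨i / 4, by omega⟩).mulVec (fun a => ϑ ![] (Fin.cons a (Fin.tail b))) = 0 := by
    funext r
    simpa [Matrix.mulVec, dotProduct, xiBlock, symb_zero_apply] using
      congrFun (congrFun h fun _ => ⟨2 * (i / 4) + r, by omega⟩) (Fin.tail b)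
  exact congrFun (Matrix.eq_zero_of_mulVec_eq_zero (det_xiBlock_ne_zero n ξ i hi) hker) (b 0)

theorem symb_zero_injective_general (n p : ℕ) (ξ : Fin (4 * n) → ℝ) (hξ : ξ ≠ 0)
    (ϑ₁ ϑ₂ : (Fin 0 → Fin (2 * n)) → (Fin (p + 1) → Fin 2) → ℂ)
    (h : symb n 0 p ξ ϑ₁ = symb n 0 p ξ ϑ₂) :
    ϑ₁ = ϑ₂ :=
  sub_eq_zero.mp <| eq_zero_of_symb_zero_eq_zero n p ξ hξ _ <| by rw [symb_sub, h, sub_self]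

/-- For `n ≥ 1`, `p ≥ 1` and nonzero `ξ ∈ ℝ^{4n}`, the symbol map
`σ_0^{(p)}(ξ) : ⊙^p ℂ² → Λ^1 ℂ^{2n} ⊗ ⊙^{p−1} ℂ²` is injective (here `p` is `p+1`). -/
theorem symb_zero_injective (n p : ℕ) (hn : 1 ≤ n) (ξ : Fin (4 * n) → ℝ) (hξ : ξ ≠ 0)
    (ϑ₁ ϑ₂ : (Fin 0 → Fin (2 * n)) → (Fin (p + 1) → Fin 2) → ℂ)
    (h₁ : IsAltSym n 0 (p + 1) ϑ₁) (h₂ : IsAltSym n 0 (p + 1) ϑ₂)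
    (h : symb n 0 p ξ ϑ₁ = symb n 0 p ξ ϑ₂) :
    ϑ₁ = ϑ₂ :=
  symb_zero_injective_general n p ξ hξ ϑ₁ ϑ₂ h
end
end

section
/- Let n ≥ 2 and 0 ≤ k ≤ 2n−3. For every nonzero ξ ∈ ℝ^{4n}, the symmetrizing symbol map s_{2n−1}^{2n−k−3}(ξ) : Λ^{2n−1} ℂ^{2n} ⊗ ⊙^{2n−k−3} ℂ² → Λ^{2n} ℂ^{2n} ⊗ ⊙^{2n−k−2} ℂ² is surjective. (This is the exactness of the symbol sequence of the k-Cauchy–Fueter complex at its last term.) -/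
noncomputable section

/-- The symmetrizing symbol map `s_q^p(ξ) : Λ^q ℂ^{2n} ⊗ ⊙^p ℂ² → Λ^{q+1} ℂ^{2n} ⊗ ⊙^{p+1} ℂ²`:
antisymmetrization (normalized by `1/(q+1)!`) and symmetrization (normalized by `1/(p+1)!`)
of `(A₁,…,A_{q+1}; B₁,…,B_{p+1}) ↦ ξ_{A₁}{}^{B₁} ϑ(A₂,…,A_{q+1}; B₂,…,B_{p+1})`. -/
def ssymb (n q p : ℕ) (ξ : Fin (4 * n) → ℝ)
    (ϑ : (Fin q → Fin (2 * n)) → (Fin p → Fin 2) → ℂ) :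
    (Fin (q + 1) → Fin (2 * n)) → (Fin (p + 1) → Fin 2) → ℂ :=
  fun A B => ((Nat.factorial (q + 1) : ℕ) : ℂ)⁻¹ * ((Nat.factorial (p + 1) : ℕ) : ℂ)⁻¹ *
    ∑ σ : Equiv.Perm (Fin (q + 1)), ∑ π : Equiv.Perm (Fin (p + 1)),
      ((Equiv.Perm.sign σ : ℤ) : ℂ) *
        (xiUp n ξ (A (σ 0)) (B (π 0)) *
          ϑ (fun t => A (σ t.succ)) (fun t => B (π t.succ)))

/-!
For `ξ ≠ 0` the `2n × 2` matrix `ξ_A{}^{A'}` is a multiple of an isometry: every pair of rows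
`2l, 2l+1` is a quaternion, so `∑_A conj (ξ_A{}^a) ξ_A{}^b = |ξ|² δ_{ab}`. Hence it has a left
inverse `μ`, and contracting `g` with `μ` in its first unprimed and first primed slot gives the
preimage `ϑ(A; B) = (q+1) ∑_{C,a} μ_C{}^a g(C, A; a, B)`. Both `s(ϑ)` and `g` are alternating of
top degree `q + 1 = 2n` in the unprimed indices, so they agree as soon as they agree at one
enumeration `e` of `{0, …, 2n−1}`; there, in `ϑ(e ∘ σ ∘ succ; ·)` only the term `C = e (σ 0)`
survives, and `μ` cancels the factor `ξ` contributed by the symmetrization.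
-/

def IsAlternatingFun {m : ℕ} {β : Type*} (f : (Fin m → β) → ℂ) : Prop :=
  ∀ (σ : Equiv.Perm (Fin m)) (a : Fin m → β), f (a ∘ σ) = ((Equiv.Perm.sign σ : ℤ) : ℂ) * f a

def IsSymmetricFun {m : ℕ} {β : Type*} (f : (Fin m → β) → ℂ) : Prop :=
  ∀ (σ : Equiv.Perm (Fin m)) (a : Fin m → β), f (a ∘ σ) = f a

theorem isAltSym_iff {n q p : ℕ} {ϑ : (Fin q → Fin (2 * n)) → (Fin p → Fin 2) → ℂ} :
    IsAltSym n q p ϑ ↔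
      (∀ B, IsAlternatingFun (ϑ · B)) ∧ ∀ A, IsSymmetricFun (ϑ A) :=
  ⟨fun h => ⟨fun B σ A => h.1 σ A B, fun A σ B => h.2 σ A B⟩,
    fun h => ⟨fun σ A B => h.1 B σ A, fun σ A B => h.2 A σ B⟩⟩

theorem Int.cast_units_mul_self (u : ℤˣ) : ((u : ℤ) : ℂ) * ((u : ℤ) : ℂ) = 1 := by
  rw [← Int.cast_mul, ← Units.val_mul, Int.units_mul_self, Units.val_one, Int.cast_one]

theorem Fin.cons_comp_decomposeFin_symm {m : ℕ} {β : Type*} (C : β) (A : Fin m → β)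
    (σ : Equiv.Perm (Fin m)) :
    (Fin.cons C A : Fin (m + 1) → β) ∘ Equiv.Perm.decomposeFin.symm (0, σ) =
      Fin.cons C (A ∘ σ) := by
  funext x
  refine Fin.cases ?_ (fun i => ?_) x
  · simp [Equiv.Perm.decomposeFin_symm_apply_zero]
  · simp [Equiv.Perm.decomposeFin_symm_apply_succ]

namespace IsAlternatingFun

variable {m : ℕ} {β : Type*}

theorem apply_eq_zero {f : (Fin m → β) → ℂ} (hf : IsAlternatingFun f) {a : Fin m → β}
    {i j : Fin m} (hij : i ≠ j) (h : a i = a j) : f a = 0 := by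
  have hfix : a ∘ Equiv.swap i j = a := by simp [Equiv.comp_swap_eq_update, h]
  have hswap := hf (Equiv.swap i j) a
  rw [hfix, Equiv.Perm.sign_swap hij] at hswap
  push_cast at hswap
  linear_combination hswap / 2

theorem apply_not_injective_eq_zero {f : (Fin m → β) → ℂ} (hf : IsAlternatingFun f)
    {a : Fin m → β} (ha : ¬ Function.Injective a) : f a = 0 := by
  obtain ⟨i, j, hij, hne⟩ := Function.not_injective_iff.mp ha
  exact hf.apply_eq_zero hne hij

theorem apply_cons_eq_zero {f : (Fin (m + 1) → β) → ℂ} (hf : IsAlternatingFun f)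
    {C : β} {A : Fin m → β} (hC : C ∈ Set.range A) : f (Fin.cons C A) = 0 := by
  obtain ⟨i, rfl⟩ := hC
  exact hf.apply_eq_zero (Fin.succ_ne_zero i).symm (by simp)

theorem comp_cons {f : (Fin (m + 1) → β) → ℂ} (hf : IsAlternatingFun f) (C : β) :
    IsAlternatingFun fun A : Fin m → β => f (Fin.cons C A) := by
  intro σ A
  dsimp only
  rw [← Fin.cons_comp_decomposeFin_symm, hf, Equiv.Perm.decomposeFin.symm_sign]
  simp

theorem ext_of_equiv {f g : (Fin m → β) → ℂ} (hf : IsAlternatingFun f)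
    (hg : IsAlternatingFun g) (e : Fin m ≃ β) (h : f e = g e) : f = g := by
  funext a
  by_cases ha : Function.Injective a
  · have hτ : Function.Bijective (e.symm ∘ a) :=
      Finite.injective_iff_bijective.mp (e.symm.injective.comp ha)
    have ha' : a = e ∘ Equiv.ofBijective _ hτ := by
      funext x
      simp
    rw [ha', hf, hg, h]
  · rw [hf.apply_not_injective_eq_zero ha, hg.apply_not_injective_eq_zero ha]

end IsAlternatingFun

theorem IsSymmetricFun.comp_cons {m : ℕ} {β : Type*} {f : (Fin (m + 1) → β) → ℂ}
    (hf : IsSymmetricFun f) (C : β) : IsSymmetricFun fun A : Fin m → β => f (Fin.cons C A) := by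
  intro σ A
  dsimp only
  rw [← Fin.cons_comp_decomposeFin_symm, hf]

theorem Equiv.Perm.sum_apply_zero {m : ℕ} {M : Type*} [AddCommMonoid M] (F : Fin (m + 1) → M) :
    ∑ σ : Equiv.Perm (Fin (m + 1)), F (σ 0) = m.factorial • ∑ c, F c := by
  rw [← Equiv.sum_comp Equiv.Perm.decomposeFin.symm, Fintype.sum_prod_type]
  simp [Equiv.Perm.decomposeFin_symm_apply_zero, Finset.sum_const, Fintype.card_perm,
    Finset.smul_sum]

theorem isAlternatingFun_ssymb (n q p : ℕ) (ξ : Fin (4 * n) → ℝ)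
    (ϑ : (Fin q → Fin (2 * n)) → (Fin p → Fin 2) → ℂ) (B : Fin (p + 1) → Fin 2) :
    IsAlternatingFun (ssymb n q p ξ ϑ · B) := by
  intro τ A
  simp only [ssymb, Finset.mul_sum]
  rw [← Equiv.sum_comp (Equiv.mulLeft τ⁻¹)]
  refine Fintype.sum_congr _ _ fun σ => Fintype.sum_congr _ _ fun π => ?_
  simp only [Equiv.coe_mulLeft, Function.comp_apply, Equiv.Perm.mul_apply,
    Equiv.Perm.inv_def, Equiv.apply_symm_apply, Equiv.Perm.sign_mul, Equiv.Perm.sign_symm]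
  push_cast
  ring

open ComplexConjugate in
theorem sum_conj_xiUp_mul_xiUp_block (n : ℕ) (ξ : Fin (4 * n) → ℝ) (l : Fin n) (a b : Fin 2) :
    ∑ r : Fin 2, conj (xiUp n ξ ((finProdFinEquiv (l, r)).cast (mul_comm n 2)) a) *
        xiUp n ξ ((finProdFinEquiv (l, r)).cast (mul_comm n 2)) b =
      if a = b then ∑ i : Fin 4, ((ξ ((finProdFinEquiv (l, i)).cast (mul_comm n 4)) ^ 2 : ℝ) : ℂ)
      else 0 := by
  have hl : (1 + 2 * (l : ℕ)) / 2 = l := by omega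
  fin_cases a <;> fin_cases b <;>
    simp [Fin.sum_univ_two, Fin.sum_univ_four, xiUp, xiMat, epsUp, finProdFinEquiv, Fin.cast, hl] <;>
    apply Complex.ext <;> simp [sq] <;> ring_nf

open ComplexConjugate in
theorem sum_conj_xiUp_mul_xiUp (n : ℕ) (ξ : Fin (4 * n) → ℝ) (a b : Fin 2) :
    ∑ C, conj (xiUp n ξ C a) * xiUp n ξ C b = if a = b then ((∑ j, ξ j ^ 2 : ℝ) : ℂ) else 0 := by
  rw [← (finProdFinEquiv.trans (finCongr (mul_comm n 2))).sum_comp, Fintype.sum_prod_type,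
    ← (finProdFinEquiv.trans (finCongr (mul_comm n 4))).sum_comp, Fintype.sum_prod_type]
  simp only [Equiv.trans_apply, finCongr_apply, sum_conj_xiUp_mul_xiUp_block]
  split_ifs <;> simp

open ComplexConjugate in
theorem exists_leftInverse_xiUp {n : ℕ} {ξ : Fin (4 * n) → ℝ} (hξ : ξ ≠ 0) :
    ∃ μ : Fin (2 * n) → Fin 2 → ℂ, ∀ a b, ∑ C, μ C a * xiUp n ξ C b = if a = b then 1 else 0 := by
  have hS : ((∑ j, ξ j ^ 2 : ℝ) : ℂ) ≠ 0 := by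
    rw [Complex.ofReal_ne_zero]
    intro h
    refine hξ (funext fun j => ?_)
    simpa using congrFun ((Fintype.sum_eq_zero_iff_of_nonneg fun j => sq_nonneg (ξ j)).mp h) j
  refine ⟨fun C a => ((∑ j, ξ j ^ 2 : ℝ) : ℂ)⁻¹ * conj (xiUp n ξ C a), fun a b => ?_⟩
  simp only [mul_assoc, ← Finset.mul_sum, sum_conj_xiUp_mul_xiUp]
  split_ifs
  · exact inv_mul_cancel₀ hS
  · exact mul_zero _

def ssymbPreimage (n q p : ℕ) (μ : Fin (2 * n) → Fin 2 → ℂ)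
    (g : (Fin (q + 1) → Fin (2 * n)) → (Fin (p + 1) → Fin 2) → ℂ) :
    (Fin q → Fin (2 * n)) → (Fin p → Fin 2) → ℂ :=
  fun A B => ((q + 1 : ℕ) : ℂ) * ∑ C, ∑ a, μ C a * g (Fin.cons C A) (Fin.cons a B)

section ssymbPreimage

variable {n q p : ℕ} {ξ : Fin (4 * n) → ℝ} {μ : Fin (2 * n) → Fin 2 → ℂ}
  {g : (Fin (q + 1) → Fin (2 * n)) → (Fin (p + 1) → Fin 2) → ℂ}

theorem isAltSym_ssymbPreimage (hg : IsAltSym n (q + 1) (p + 1) g) :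
    IsAltSym n q p (ssymbPreimage n q p μ g) := by
  obtain ⟨hg_alt, hg_symm⟩ := isAltSym_iff.mp hg
  refine isAltSym_iff.mpr ⟨fun B σ A => ?_, fun A σ B => ?_⟩
  · simp only [ssymbPreimage, (hg_alt _).comp_cons _ σ A, Finset.mul_sum]
    exact Fintype.sum_congr _ _ fun C => Fintype.sum_congr _ _ fun a => by ring
  · simp only [ssymbPreimage, (hg_symm _).comp_cons _ σ B]

theorem ssymbPreimage_tail_equiv (hg : ∀ B, IsAlternatingFun (g · B))
    (e : Fin (q + 1) ≃ Fin (2 * n)) (D : Fin p → Fin 2) :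
    ssymbPreimage n q p μ g (Fin.tail e) D =
      ((q + 1 : ℕ) : ℂ) * ∑ a, μ (e 0) a * g e (Fin.cons a D) := by
  rw [ssymbPreimage, Finset.sum_eq_single (e 0)]
  · rw [Fin.cons_self_tail]
  · intro C _ hC
    refine Finset.sum_eq_zero fun a _ => ?_
    have hC_mem : C ∈ Set.range (Fin.tail e) := by
      obtain ⟨i, rfl⟩ := e.surjective C
      obtain ⟨j, rfl⟩ := Fin.exists_succ_eq.mpr (fun h : i = 0 => hC (h ▸ rfl))
      exact ⟨j, rfl⟩
    rw [(hg _).apply_cons_eq_zero hC_mem, mul_zero]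
  · simp

theorem sum_xiUp_mul_sum_of_leftInverse
    (hμ : ∀ a b, ∑ C, μ C a * xiUp n ξ C b = if a = b then 1 else 0)
    (e : Fin (q + 1) ≃ Fin (2 * n)) (h : Fin 2 → ℂ) (b : Fin 2) :
    ∑ c, xiUp n ξ (e c) b * ∑ a, μ (e c) a * h a = h b :=
  calc ∑ c, xiUp n ξ (e c) b * ∑ a, μ (e c) a * h a
      = ∑ a, (∑ C, μ C a * xiUp n ξ C b) * h a := by
        rw [e.sum_comp fun C => xiUp n ξ C b * ∑ a, μ C a * h a]
        simp only [Finset.mul_sum, Finset.sum_mul]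
        rw [Finset.sum_comm]
        exact Fintype.sum_congr _ _ fun a => Fintype.sum_congr _ _ fun C => by ring
    _ = h b := by simp [hμ]

theorem ssymb_ssymbPreimage_apply_equiv
    (hμ : ∀ a b, ∑ C, μ C a * xiUp n ξ C b = if a = b then 1 else 0)
    (hg : IsAltSym n (q + 1) (p + 1) g) (e : Fin (q + 1) ≃ Fin (2 * n))
    (B : Fin (p + 1) → Fin 2) :
    ssymb n q p ξ (ssymbPreimage n q p μ g) e B = g e B := by
  obtain ⟨hg_alt, hg_symm⟩ := isAltSym_iff.mp hg
  set F : Equiv.Perm (Fin (p + 1)) → Fin (q + 1) → ℂ := fun π c =>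
    xiUp n ξ (e c) ((B ∘ π) 0) * ∑ a, μ (e c) a * g e (Fin.cons a (Fin.tail (B ∘ π)))
  have hterm : ∀ σ π, ((Equiv.Perm.sign σ : ℤ) : ℂ) * (xiUp n ξ (e (σ 0)) (B (π 0)) *
      ssymbPreimage n q p μ g (fun t => e (σ t.succ)) (fun t => B (π t.succ))) =
      ((q + 1 : ℕ) : ℂ) * F π (σ 0) := by
    intro σ π
    have h : ssymbPreimage n q p μ g (fun t => e (σ t.succ)) (fun t => B (π t.succ)) =
        ((q + 1 : ℕ) : ℂ) * ∑ a, μ (e (σ 0)) a * g (e ∘ σ) (Fin.cons a (Fin.tail (B ∘ π))) :=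
      ssymbPreimage_tail_equiv hg_alt (σ.trans e) _
    -- `sign σ` occurs twice on the left: from the antisymmetrization and from `g (e ∘ σ)`
    rw [← one_mul (((q + 1 : ℕ) : ℂ) * F π (σ 0)), ← Int.cast_units_mul_self (Equiv.Perm.sign σ)]
    simp only [h, F, hg_alt _ σ e, Finset.mul_sum, Function.comp_apply]
    exact Fintype.sum_congr _ _ fun a => by ring
  have hsum : ∀ π, ∑ σ : Equiv.Perm (Fin (q + 1)), F π (σ 0) = q.factorial * g e B := by
    intro π
    rw [Equiv.Perm.sum_apply_zero, nsmul_eq_mul, sum_xiUp_mul_sum_of_leftInverse hμ e,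
      Fin.cons_self_tail, hg_symm]
  simp only [ssymb, hterm, ← Finset.mul_sum]
  rw [Finset.sum_comm]
  simp only [← Finset.mul_sum, hsum, Finset.sum_const, Finset.card_univ, Fintype.card_perm,
    Fintype.card_fin, nsmul_eq_mul, Nat.factorial_succ q]
  have hq : (q.factorial : ℂ) ≠ 0 := Nat.cast_ne_zero.mpr q.factorial_ne_zero
  have hp : ((p + 1).factorial : ℂ) ≠ 0 := Nat.cast_ne_zero.mpr (p + 1).factorial_ne_zero
  push_cast
  field_simp

theorem ssymb_ssymbPreimage (hq : q + 1 = 2 * n)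
    (hμ : ∀ a b, ∑ C, μ C a * xiUp n ξ C b = if a = b then 1 else 0)
    (hg : IsAltSym n (q + 1) (p + 1) g) :
    ssymb n q p ξ (ssymbPreimage n q p μ g) = g := by
  funext A B
  exact congrFun ((isAlternatingFun_ssymb n q p ξ _ B).ext_of_equiv ((isAltSym_iff.mp hg).1 B)
    (finCongr hq) (ssymb_ssymbPreimage_apply_equiv hμ hg _ B)) A

end ssymbPreimage

theorem ssymb_last_surjective_general (n k p : ℕ) (hkp : k + p + 3 = 2 * n)
    (ξ : Fin (4 * n) → ℝ) (hξ : ξ ≠ 0)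
    (g : (Fin (k + p + 3) → Fin (2 * n)) → (Fin (p + 1) → Fin 2) → ℂ)
    (hg : IsAltSym n (k + p + 3) (p + 1) g) :
    ∃ ϑ : (Fin (k + p + 2) → Fin (2 * n)) → (Fin p → Fin 2) → ℂ,
      IsAltSym n (k + p + 2) p ϑ ∧ ssymb n (k + p + 2) p ξ ϑ = g := by
  obtain ⟨μ, hμ⟩ := exists_leftInverse_xiUp hξ
  exact ⟨ssymbPreimage n (k + p + 2) p μ g, isAltSym_ssymbPreimage hg,
    ssymb_ssymbPreimage hkp hμ hg⟩

/-- Surjectivity of the last symbol map of the `k`-Cauchy–Fueter complex: for `n ≥ 2`,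
`0 ≤ k ≤ 2n−3` (here `p = 2n−k−3 ≥ 0` and `k+p+3 = 2n`) and nonzero `ξ ∈ ℝ^{4n}`, the map
`s_{2n−1}^{2n−k−3}(ξ) : Λ^{2n−1} ℂ^{2n} ⊗ ⊙^{2n−k−3} ℂ² → Λ^{2n} ℂ^{2n} ⊗ ⊙^{2n−k−2} ℂ²`
is surjective. -/
theorem ssymb_last_surjective (n k p : ℕ) (hn : 2 ≤ n) (hkp : k + p + 3 = 2 * n)
    (ξ : Fin (4 * n) → ℝ) (hξ : ξ ≠ 0)
    (g : (Fin (k + p + 3) → Fin (2 * n)) → (Fin (p + 1) → Fin 2) → ℂ)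
    (hg : IsAltSym n (k + p + 3) (p + 1) g) :
    ∃ ϑ : (Fin (k + p + 2) → Fin (2 * n)) → (Fin p → Fin 2) → ℂ,
      IsAltSym n (k + p + 2) p ϑ ∧ ssymb n (k + p + 2) p ξ ϑ = g :=
  ssymb_last_surjective_general n k p hkp ξ hξ g hg
end
end

section
/- Let n ≥ 1, j ≥ 0, p ≥ 1, let M be an invertible quaternionic n×n matrix, and let ξ ∈ ℝ^{4n}. Then: (a) there exists a (unique) ξ̃ ∈ ℝ^{4n} such that (ξ̃_{AA'}) = τ(M)·(ξ_{AA'}); and (b) for every ϑ ∈ Λ^j ℂ^{2n} ⊗ ⊙^p ℂ², defining ϑ̃(A₁,…,A_j; A'₁,…,A'_p) := ∑_{B₁,…,B_j} τ(M)_{A₁B₁}⋯τ(M)_{A_jB_j} ϑ(B₁,…,B_j; A'₁,…,A'_p), one has σ_j^{(p)}(ξ̃)(ϑ̃) = the corresponding τ(M)-transform (applied to all j+1 unprimed arguments) of σ_j^{(p)}(ξ)(ϑ). -/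
noncomputable section
/-- The 2×2 complex block associated to a quaternion `x₁ + x₂ i + x₃ j + x₄ k`:
`[[x₁ + i x₂, −x₃ − i x₄], [x₃ − i x₄, x₁ − i x₂]]`. -/
def tauBlock (q : Quaternion ℝ) : Fin 2 → Fin 2 → ℂ := fun r c =>
  if r.val = 0 then
    (if c.val = 0 then (⟨q.re, q.imI⟩ : ℂ) else (⟨-q.imJ, -q.imK⟩ : ℂ))
  else
    (if c.val = 0 then (⟨q.imJ, -q.imK⟩ : ℂ) else (⟨q.re, -q.imI⟩ : ℂ))

/-- The complexification `τ` of a quaternionic `p × m` matrix: the complex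
`2p × 2m` matrix whose `(j,k)` 2×2 block is `tauBlock (A j k)`. -/
def tau {p m : ℕ} (A : Matrix (Fin p) (Fin m) (Quaternion ℝ)) :
    Matrix (Fin (2 * p)) (Fin (2 * m)) ℂ :=
  Matrix.of fun i k =>
    tauBlock (A ⟨i.val / 2, by have := i.isLt; omega⟩ ⟨k.val / 2, by have := k.isLt; omega⟩)
      ⟨i.val % 2, by omega⟩ ⟨k.val % 2, by omega⟩

/-- The `GL(n,ℍ)`-transform of a tensor in `Λ^j ℂ^{2n} ⊗ ⊙^p ℂ²`, applying the complex
matrix `T` to all unprimed arguments. -/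
def mtrans (n j p : ℕ) (T : Matrix (Fin (2 * n)) (Fin (2 * n)) ℂ)
    (ϑ : (Fin j → Fin (2 * n)) → (Fin p → Fin 2) → ℂ) :
    (Fin j → Fin (2 * n)) → (Fin p → Fin 2) → ℂ :=
  fun A B => ∑ C : Fin j → Fin (2 * n), (∏ t : Fin j, T (A t) (C t)) * ϑ C B

namespace SymbEquivAux

variable {n : ℕ}

lemma sum_pair (f : Fin (2*n) → ℂ) :
    ∑ B, f B = ∑ b : Fin n, (f ⟨2*b.val, by omega⟩ + f ⟨2*b.val+1, by omega⟩) := by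
  have hbij : Function.Bijective
      (fun x : Fin n × Fin 2 => (⟨2*x.1.val + x.2.val, by omega⟩ : Fin (2*n))) := by
    rw [Fintype.bijective_iff_injective_and_card]
    constructor
    · intro x y h
      have h' : 2*x.1.val + x.2.val = 2*y.1.val + y.2.val := congrArg Fin.val h
      exact Prod.ext (Fin.ext (by have := x.2.isLt; have := y.2.isLt; omega))
        (Fin.ext (by have := x.2.isLt; have := y.2.isLt; omega))
    · simp [mul_comm]
  rw [← Fintype.sum_bijective _ hbij _ f (fun _ => rfl), Fintype.sum_prod_type]
  exact Finset.sum_congr rfl fun b _ => by rw [Fin.sum_univ_two]; rfl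

variable (M : Matrix (Fin n) (Fin n) (Quaternion ℝ))

lemma tau_ee (l b : ℕ) (hl : l < n) (hb : b < n) :
    tau M ⟨2*l, by omega⟩ ⟨2*b, by omega⟩ = ⟨(M ⟨l,hl⟩ ⟨b,hb⟩).re, (M ⟨l,hl⟩ ⟨b,hb⟩).imI⟩ := by
  have h1 : ((2*l)/2) = l := by omega
  have h2 : ((2*b)/2) = b := by omega
  simp [tau, tauBlock, Nat.mul_mod_right, h1, h2]

lemma tau_eo (l b : ℕ) (hl : l < n) (hb : b < n) :
    tau M ⟨2*l, by omega⟩ ⟨2*b+1, by omega⟩ = ⟨-(M ⟨l,hl⟩ ⟨b,hb⟩).imJ, -(M ⟨l,hl⟩ ⟨b,hb⟩).imK⟩ := by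
  have h1 : ((2*l)/2) = l := by omega
  have h2 : ((2*b+1)/2) = b := by omega
  have h3 : (2*b+1) % 2 = 1 := by omega
  simp [tau, tauBlock, Nat.mul_mod_right, h1, h2, h3]

lemma tau_oe (l b : ℕ) (hl : l < n) (hb : b < n) :
    tau M ⟨2*l+1, by omega⟩ ⟨2*b, by omega⟩ = ⟨(M ⟨l,hl⟩ ⟨b,hb⟩).imJ, -(M ⟨l,hl⟩ ⟨b,hb⟩).imK⟩ := by
  have h1 : ((2*l+1)/2) = l := by omega
  have h2 : ((2*b)/2) = b := by omega
  have h3 : (2*l+1) % 2 = 1 := by omega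
  simp [tau, tauBlock, Nat.mul_mod_right, h1, h2, h3]

lemma tau_oo (l b : ℕ) (hl : l < n) (hb : b < n) :
    tau M ⟨2*l+1, by omega⟩ ⟨2*b+1, by omega⟩ = ⟨(M ⟨l,hl⟩ ⟨b,hb⟩).re, -(M ⟨l,hl⟩ ⟨b,hb⟩).imI⟩ := by
  have h1 : ((2*l+1)/2) = l := by omega
  have h2 : ((2*b+1)/2) = b := by omega
  have h3 : (2*l+1) % 2 = 1 := by omega
  have h4 : (2*b+1) % 2 = 1 := by omega
  simp [tau, tauBlock, h1, h2, h3, h4]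

variable (ξ : Fin (4*n) → ℝ)

lemma xi_e0 (b : ℕ) (hb : b < n) :
    xiMat n ξ ⟨2*b, by omega⟩ 0 = ⟨ξ ⟨4*b, by omega⟩, ξ ⟨4*b+1, by omega⟩⟩ := by
  have h2 : ((2*b)/2) = b := by omega
  simp [xiMat, Nat.mul_mod_right, h2]

lemma xi_e1 (b : ℕ) (hb : b < n) :
    xiMat n ξ ⟨2*b, by omega⟩ 1 = ⟨-ξ ⟨4*b+2, by omega⟩, -ξ ⟨4*b+3, by omega⟩⟩ := by
  have h2 : ((2*b)/2) = b := by omega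
  simp [xiMat, Nat.mul_mod_right, h2]

lemma xi_o0 (b : ℕ) (hb : b < n) :
    xiMat n ξ ⟨2*b+1, by omega⟩ 0 = ⟨ξ ⟨4*b+2, by omega⟩, -ξ ⟨4*b+3, by omega⟩⟩ := by
  have h2 : ((2*b+1)/2) = b := by omega
  have h3 : (2*b+1) % 2 = 1 := by omega
  simp [xiMat, h2, h3]

lemma xi_o1 (b : ℕ) (hb : b < n) :
    xiMat n ξ ⟨2*b+1, by omega⟩ 1 = ⟨ξ ⟨4*b, by omega⟩, -ξ ⟨4*b+1, by omega⟩⟩ := by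
  have h2 : ((2*b+1)/2) = b := by omega
  have h3 : (2*b+1) % 2 = 1 := by omega
  simp [xiMat, h2, h3]

lemma struct (l : ℕ) (hl : l < n) :
    (tau M * xiMat n ξ) ⟨2*l, by omega⟩ 1
        = -(starRingEnd ℂ) ((tau M * xiMat n ξ) ⟨2*l+1, by omega⟩ 0) ∧
    (tau M * xiMat n ξ) ⟨2*l+1, by omega⟩ 1
        = (starRingEnd ℂ) ((tau M * xiMat n ξ) ⟨2*l, by omega⟩ 0) := by
  constructor
  · rw [Matrix.mul_apply, Matrix.mul_apply, sum_pair, sum_pair, map_sum,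
      ← Finset.sum_neg_distrib]
    refine Finset.sum_congr rfl fun b _ => ?_
    rw [tau_ee M l b hl b.isLt, xi_e1 ξ b b.isLt, tau_eo M l b hl b.isLt, xi_o1 ξ b b.isLt,
        tau_oe M l b hl b.isLt, xi_e0 ξ b b.isLt, tau_oo M l b hl b.isLt, xi_o0 ξ b b.isLt]
    apply Complex.ext <;> simp [Complex.mul_re, Complex.mul_im] <;> ring
  · rw [Matrix.mul_apply, Matrix.mul_apply, sum_pair, sum_pair, map_sum]
    refine Finset.sum_congr rfl fun b _ => ?_
    rw [tau_oe M l b hl b.isLt, xi_e1 ξ b b.isLt, tau_oo M l b hl b.isLt, xi_o1 ξ b b.isLt,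
        tau_ee M l b hl b.isLt, xi_e0 ξ b b.isLt, tau_eo M l b hl b.isLt, xi_o0 ξ b b.isLt]
    apply Complex.ext <;> simp [Complex.mul_re, Complex.mul_im] <;> ring

lemma xiMat_inj (a b : Fin (4*n) → ℝ) (h : xiMat n a = xiMat n b) : a = b := by
  funext i
  have hb : i.val/4 < n := by have := i.isLt; omega
  have h0 := congrFun (congrFun h ⟨2*(i.val/4), by omega⟩) 0
  have h1 := congrFun (congrFun h ⟨2*(i.val/4)+1, by omega⟩) 0
  rw [xi_e0 a _ hb, xi_e0 b _ hb, Complex.mk.injEq] at h0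
  rw [xi_o0 a _ hb, xi_o0 b _ hb, Complex.mk.injEq] at h1
  have hi : i = ⟨4*(i.val/4) + i.val%4, by have := i.isLt; omega⟩ :=
    Fin.ext (by show i.val = 4*(i.val/4) + i.val%4; omega)
  have hc : i.val%4 = 0 ∨ i.val%4 = 1 ∨ i.val%4 = 2 ∨ i.val%4 = 3 := by omega
  rw [hi]
  rcases hc with hc | hc | hc | hc <;> simp only [hc]
  · simpa using h0.1
  · exact h0.2
  · exact h1.1
  · exact neg_injective h1.2

def xiT (M : Matrix (Fin n) (Fin n) (Quaternion ℝ)) (ξ : Fin (4*n) → ℝ) :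
    Fin (4*n) → ℝ := fun i =>
  if i.val % 2 = 0 then ((tau M * xiMat n ξ) ⟨i.val/2, by have := i.isLt; omega⟩ 0).re
  else (if i.val % 4 = 1 then 1 else -1) *
    ((tau M * xiMat n ξ) ⟨i.val/2, by have := i.isLt; omega⟩ 0).im

lemma xiT_spec : xiMat n (xiT M ξ) = tau M * xiMat n ξ := by
  have v0 : ∀ (b : ℕ) (hb : b < n),
      xiT M ξ ⟨4*b, by omega⟩ = ((tau M * xiMat n ξ) ⟨2*b, by omega⟩ 0).re := by
    intro b hb
    simp only [xiT, show (4*b) % 2 = 0 from by omega, show (4*b)/2 = 2*b from by omega]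
    simp
  have v1 : ∀ (b : ℕ) (hb : b < n),
      xiT M ξ ⟨4*b+1, by omega⟩ = ((tau M * xiMat n ξ) ⟨2*b, by omega⟩ 0).im := by
    intro b hb
    simp only [xiT, show (4*b+1) % 2 = 1 from by omega, show (4*b+1) % 4 = 1 from by omega,
      show (4*b+1)/2 = 2*b from by omega]
    simp
  have v2 : ∀ (b : ℕ) (hb : b < n),
      xiT M ξ ⟨4*b+2, by omega⟩ = ((tau M * xiMat n ξ) ⟨2*b+1, by omega⟩ 0).re := by
    intro b hb
    simp only [xiT, show (4*b+2) % 2 = 0 from by omega, show (4*b+2)/2 = 2*b+1 from by omega]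
    simp
  have v3 : ∀ (b : ℕ) (hb : b < n),
      xiT M ξ ⟨4*b+3, by omega⟩ = -((tau M * xiMat n ξ) ⟨2*b+1, by omega⟩ 0).im := by
    intro b hb
    simp only [xiT, show (4*b+3) % 2 = 1 from by omega, show (4*b+3) % 4 = 3 from by omega,
      show (4*b+3)/2 = 2*b+1 from by omega]
    simp
  funext A A'
  have hb : A.val/2 < n := by have := A.isLt; omega
  have hA : A = ⟨2*(A.val/2), by omega⟩ ∨ A = ⟨2*(A.val/2)+1, by omega⟩ := by
    rcases Nat.mod_two_eq_zero_or_one A.val with h | h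
    · exact Or.inl (Fin.ext (by show A.val = 2*(A.val/2); omega))
    · exact Or.inr (Fin.ext (by show A.val = 2*(A.val/2)+1; omega))
  have hA' : A' = 0 ∨ A' = 1 := by
    rcases A' with ⟨v, hv⟩
    interval_cases v
    · exact Or.inl rfl
    · exact Or.inr rfl
  rcases hA' with hA' | hA' <;> rcases hA with hA | hA <;> rw [hA, hA']
  · rw [xi_e0 (xiT M ξ) _ hb, v0 _ hb, v1 _ hb]
  · rw [xi_o0 (xiT M ξ) _ hb, v2 _ hb, v3 _ hb, neg_neg]
  · rw [xi_e1 (xiT M ξ) _ hb, v2 _ hb, v3 _ hb, (struct M ξ _ hb).1]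
    apply Complex.ext <;> simp
  · rw [xi_o1 (xiT M ξ) _ hb, v0 _ hb, v1 _ hb, (struct M ξ _ hb).2]
    apply Complex.ext <;> simp

lemma xiUp_trans (ξt : Fin (4*n) → ℝ) (h : xiMat n ξt = tau M * xiMat n ξ)
    (A : Fin (2*n)) (a : Fin 2) :
    xiUp n ξt A a = ∑ C, tau M A C * xiUp n ξ C a := by
  unfold xiUp
  rw [h]
  simp only [Matrix.mul_apply, Finset.sum_mul, Finset.mul_sum, mul_assoc]
  exact Finset.sum_comm

lemma main (j p : ℕ) (ξt : Fin (4*n) → ℝ) (h : xiMat n ξt = tau M * xiMat n ξ)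
    (ϑ : (Fin j → Fin (2*n)) → (Fin (p+1) → Fin 2) → ℂ) :
    symb n j p ξt (mtrans n j (p+1) (tau M) ϑ)
      = mtrans n (j+1) p (tau M) (symb n j p ξ ϑ) := by
  funext A B
  simp only [symb, mtrans, xiUp_trans M ξ ξt h]
  conv_rhs => enter [2, E]; rw [mul_left_comm, Finset.mul_sum]
  rw [← Finset.mul_sum]
  congr 1
  conv_rhs => rw [Finset.sum_comm]
  refine Finset.sum_congr rfl fun s _ => ?_
  rw [← Equiv.sum_comp (Fin.insertNthEquiv (fun _ => Fin (2*n)) s), Fintype.sum_prod_type]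
  have hprod : ∀ (C : Fin (2*n)) (D : Fin j → Fin (2*n)),
      (∏ t : Fin (j+1), tau M (A t) (Fin.insertNth (α := fun _ => Fin (2*n)) s C D t))
        = tau M (A s) C * ∏ t : Fin j, tau M (A (s.succAbove t)) (D t) := by
    intro C D
    rw [Fin.prod_univ_succAbove (fun t => tau M (A t) (Fin.insertNth (α := fun _ => Fin (2*n)) s C D t)) s]
    simp
  simp only [Fin.insertNthEquiv_apply, Function.comp_def, hprod, Fin.insertNth_apply_same,
    Fin.insertNth_apply_succAbove]
  simp only [Finset.mul_sum, Finset.sum_mul]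
  conv_lhs => rw [Finset.sum_comm]
  conv_rhs => rw [Finset.sum_comm]
  refine Finset.sum_congr rfl fun D _ => ?_
  rw [Finset.sum_comm]
  refine Finset.sum_congr rfl fun C _ => Finset.sum_congr rfl fun a _ => ?_
  ring

end SymbEquivAux

/-- Equivariance of the symbol maps: (a) for an invertible quaternionic matrix `M` there
is a unique `ξ̃ ∈ ℝ^{4n}` with `(ξ̃_{AA'}) = τ(M)·(ξ_{AA'})`, and (b) for this `ξ̃` and
every `ϑ ∈ Λ^j ℂ^{2n} ⊗ ⊙^p ℂ²`, `σ_j^{(p)}(ξ̃)(ϑ̃)` equals the `τ(M)`-transform of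
`σ_j^{(p)}(ξ)(ϑ)` (here the statement's `p` is `p+1`). -/
theorem symb_equivariant (n j p : ℕ) (hn : 1 ≤ n)
    (M : Matrix (Fin n) (Fin n) (Quaternion ℝ)) (hM : IsUnit M)
    (ξ : Fin (4 * n) → ℝ) :
    (∃! ξt : Fin (4 * n) → ℝ, xiMat n ξt = tau M * xiMat n ξ) ∧
    (∀ ξt : Fin (4 * n) → ℝ, xiMat n ξt = tau M * xiMat n ξ →
      ∀ ϑ : (Fin j → Fin (2 * n)) → (Fin (p + 1) → Fin 2) → ℂ, IsAltSym n j (p + 1) ϑ →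
        symb n j p ξt (mtrans n j (p + 1) (tau M) ϑ) =
          mtrans n (j + 1) p (tau M) (symb n j p ξ ϑ)) := by
  constructor
  · exact ⟨SymbEquivAux.xiT M ξ, SymbEquivAux.xiT_spec M ξ,
      fun y hy => SymbEquivAux.xiMat_inj y _ (hy.trans (SymbEquivAux.xiT_spec M ξ).symm)⟩
  · intro ξt h ϑ _
    exact SymbEquivAux.main M ξ j p ξt h ϑ
end
end

section
/- Let r ≥ 2 and let f : {0,1}^r → ℂ satisfy: (i) f(a₁,a₂,…,a_r) is invariant under all permutations of its last r−1 arguments (a₂,…,a_r); and (ii) the total symmetrization of f vanishes, i.e. ∑_{σ ∈ S_r} f(a_{σ(1)},…,a_{σ(r)}) = 0 for all (a₁,…,a_r) ∈ {0,1}^r. Then for all (a₁,…,a_r) ∈ {0,1}^r: f(a₁,…,a_r) = (1/r) ∑_{j=2}^{r} ε(a₁, a_j) · G(a₂,…,â_j,…,a_r), where G(b₁,…,b_{r−2}) := ∑_{c,d ∈ {0,1}} ε(c,d) · f(c, b₁,…,b_{r−2}, d), and â_j means the argument a_j is omitted. -/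
noncomputable section

/-- The epsilon symbol on `{0,1}`: `ε(0,1) = 1`, `ε(1,0) = −1`, `ε(0,0) = ε(1,1) = 0`. -/
def epsZ (a b : Fin 2) : ℤ :=
  if a.val = 0 ∧ b.val = 1 then 1 else if a.val = 1 ∧ b.val = 0 then -1 else 0

/-- An injective self-map of `Fin n` gives a permutation. -/
lemma perm_of_inj {n : ℕ} (g : Fin n → Fin n) (hg : Function.Injective g) :
    ∃ ρ : Equiv.Perm (Fin n), ∀ k, ρ k = g k :=
  ⟨Equiv.ofBijective g (Finite.injective_iff_bijective.mp hg), fun _ => rfl⟩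

/-- `Fin.snoc` of an injective map and a fresh element is injective. -/
lemma snoc_inj {n : ℕ} {β : Type*} (g : Fin n → β) (x : β) (hg : Function.Injective g)
    (hx : ∀ k, g k ≠ x) : Function.Injective (Fin.snoc g x : Fin (n + 1) → β) := by
  intro k l h
  induction k using Fin.lastCases with
  | last =>
    induction l using Fin.lastCases with
    | last => rfl
    | cast l =>
      rw [Fin.snoc_last, Fin.snoc_castSucc] at h
      exact absurd h.symm (hx l)
  | cast k =>
    induction l using Fin.lastCases with
    | last =>
      rw [Fin.snoc_castSucc, Fin.snoc_last] at h
      exact absurd h (hx k)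
    | cast l =>
      rw [Fin.snoc_castSucc, Fin.snoc_castSucc] at h
      exact congrArg Fin.castSucc (hg h)

/-- An injective map `Fin n → Fin (n+1)` missing `i` factors through `i.succAbove`. -/
lemma factor_succAbove {n : ℕ} (i : Fin (n + 1)) (g : Fin n → Fin (n + 1))
    (hg : Function.Injective g) (hne : ∀ k, g k ≠ i) :
    ∃ ρ : Equiv.Perm (Fin n), ∀ k, i.succAbove (ρ k) = g k := by
  choose r hr using fun k => Fin.exists_succAbove_eq (hne k)
  have hrinj : Function.Injective r := fun k l h => by
    apply hg; rw [← hr k, ← hr l, h]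
  obtain ⟨ρ, hρ⟩ := perm_of_inj r hrinj
  exact ⟨ρ, fun k => by rw [hρ, hr]⟩

/-- Lemma 4.1 (flat model): if `f : {0,1}^r → ℂ` (with `r = m+2 ≥ 2`) is symmetric in its
last `r−1` arguments and its total symmetrization vanishes, then
`f(a₁,…,a_r) = (1/r) ∑_{j=2}^{r} ε(a₁,a_j) G(a₂,…,â_j,…,a_r)` where
`G(b₁,…,b_{r−2}) = ∑_{c,d} ε(c,d) f(c,b₁,…,b_{r−2},d)`. -/
theorem sym_traceless_decomposition (m : ℕ) (f : (Fin (m + 2) → Fin 2) → ℂ)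
    (h1 : ∀ (c : Fin 2) (b : Fin (m + 1) → Fin 2) (σ : Equiv.Perm (Fin (m + 1))),
        f (Fin.cons c (b ∘ σ)) = f (Fin.cons c b))
    (h2 : ∀ a : Fin (m + 2) → Fin 2,
        ∑ σ : Equiv.Perm (Fin (m + 2)), f (a ∘ σ) = 0) :
    ∀ a : Fin (m + 2) → Fin 2,
      f a = ((m + 2 : ℕ) : ℂ)⁻¹ * ∑ j : Fin (m + 1), (epsZ (a 0) (a j.succ) : ℂ) *
        ∑ c : Fin 2, ∑ d : Fin 2, (epsZ c d : ℂ) *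
          f (Fin.cons c (Fin.snoc (Fin.tail a ∘ j.succAbove) d)) := by
  intro a
  set F : Fin (m + 2) → ℂ := fun i => f (Fin.cons (a i) (a ∘ i.succAbove)) with hF
  have hperm : ∀ (c : Fin 2) (b b' : Fin (m + 1) → Fin 2),
      (∃ ρ : Equiv.Perm (Fin (m + 1)), ∀ k, b (ρ k) = b' k) →
      f (Fin.cons c b') = f (Fin.cons c b) := by
    rintro c b b' ⟨ρ, hρ⟩
    have : b' = b ∘ ρ := funext fun k => (hρ k).symm
    rw [this, h1]
  -- key: value of f ∘ a ∘ σ depends only on σ 0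
  have key : ∀ σ : Equiv.Perm (Fin (m + 2)), f (a ∘ σ) = F (σ 0) := by
    intro σ
    have h0 : a ∘ σ = Fin.cons (a (σ 0)) (fun k => a (σ k.succ)) := by
      funext k
      refine Fin.cases ?_ ?_ k <;> simp
    rw [h0, hF]
    refine hperm _ _ _ ?_
    obtain ⟨ρ, hρ⟩ := factor_succAbove (σ 0) (fun k : Fin (m + 1) => σ k.succ)
      (fun k l h => Fin.succ_injective _ (σ.injective h))
      (fun k h => (Fin.succ_ne_zero k) (σ.injective h))
    exact ⟨ρ, fun k => by simp [Function.comp, hρ k]⟩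
  -- total symmetrization gives ∑ F = 0
  have H : ∑ i : Fin (m + 2), F i = 0 := by
    have h3 : ∑ p : Fin (m + 2) × Equiv.Perm (Fin (m + 1)), F p.1 = 0 := by
      rw [← h2 a, ← Equiv.sum_comp (Equiv.Perm.decomposeFin.symm)
        (fun σ : Equiv.Perm (Fin (m + 2)) => f (a ∘ σ))]
      refine Finset.sum_congr rfl ?_
      rintro ⟨i, τ⟩ -
      rw [key]
      exact congrArg F (Equiv.Perm.decomposeFin_symm_apply_zero i τ).symm
    rw [Fintype.sum_prod_type, Finset.sum_comm] at h3
    simp only [Finset.sum_const, Finset.card_univ] at h3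
    exact (smul_eq_zero.mp h3).resolve_left Fintype.card_ne_zero
  have hF0 : F 0 = f a := by
    rw [hF]
    simp only [Fin.succAbove_zero]
    rw [show a ∘ Fin.succ = Fin.tail a from rfl, Fin.cons_self_tail]
  -- per-j identity
  have step : ∀ j : Fin (m + 1),
      (epsZ (a 0) (a j.succ) : ℂ) * ∑ c : Fin 2, ∑ d : Fin 2, (epsZ c d : ℂ) *
        f (Fin.cons c (Fin.snoc (Fin.tail a ∘ j.succAbove) d)) = f a - F j.succ := by
    intro j
    set t : Fin m → Fin 2 := Fin.tail a ∘ j.succAbove with ht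
    have e1 : f (Fin.cons (a 0) (Fin.snoc t (a j.succ))) = f a := by
      have ha : f a = f (Fin.cons (a 0) (Fin.tail a)) := by rw [Fin.cons_self_tail]
      rw [ha]
      refine hperm _ _ _ ?_
      obtain ⟨ρ, hρ⟩ := perm_of_inj (Fin.snoc (fun k => j.succAbove k) j)
        (snoc_inj _ _ (fun k l h => j.succAbove_right_injective h)
          (fun k => Fin.succAbove_ne j k))
      refine ⟨ρ, fun k => ?_⟩
      induction k using Fin.lastCases with
      | last => rw [hρ, Fin.snoc_last, Fin.snoc_last]; rfl
      | cast k => rw [hρ, Fin.snoc_castSucc, Fin.snoc_castSucc]; rfl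
    have e2 : f (Fin.cons (a j.succ) (Fin.snoc t (a 0))) = F j.succ := by
      rw [hF]
      refine hperm _ _ _ ?_
      obtain ⟨ρ, hρ⟩ := perm_of_inj (Fin.snoc Fin.succ (0 : Fin (m + 1)))
        (snoc_inj _ _ (Fin.succ_injective _) (fun k => Fin.succ_ne_zero k))
      refine ⟨ρ, fun k => ?_⟩
      induction k using Fin.lastCases with
      | last =>
        rw [hρ, Fin.snoc_last, Fin.snoc_last]
        show a (Fin.succAbove j.succ 0) = a 0
        rw [Fin.succ_succAbove_zero]
      | cast k =>
        rw [hρ, Fin.snoc_castSucc, Fin.snoc_castSucc]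
        show a (Fin.succAbove j.succ k.succ) = t k
        rw [Fin.succ_succAbove_succ, ht]
        rfl
    have inner : ∑ c : Fin 2, ∑ d : Fin 2, (epsZ c d : ℂ) *
        f (Fin.cons c (Fin.snoc t d)) =
        f (Fin.cons 0 (Fin.snoc t 1)) - f (Fin.cons 1 (Fin.snoc t 0)) := by
      rw [Fin.sum_univ_two, Fin.sum_univ_two, Fin.sum_univ_two]
      simp [epsZ]
      ring
    rw [inner, ← e1, ← e2]
    rcases Fin.exists_fin_two.mp ⟨a 0, rfl⟩ with h0 | h0 <;>
      rcases Fin.exists_fin_two.mp ⟨a j.succ, rfl⟩ with hj | hj <;>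
      rw [h0, hj] <;> simp [epsZ]
  -- assemble
  have hsucc : ∑ j : Fin (m + 1), F j.succ = -f a := by
    have h4 := Fin.sum_univ_succ F
    rw [H, hF0] at h4
    linear_combination -h4
  have hsum : ∑ j : Fin (m + 1), (epsZ (a 0) (a j.succ) : ℂ) *
      ∑ c : Fin 2, ∑ d : Fin 2, (epsZ c d : ℂ) *
        f (Fin.cons c (Fin.snoc (Fin.tail a ∘ j.succAbove) d)) =
      ((m + 2 : ℕ) : ℂ) * f a := by
    rw [Finset.sum_congr rfl fun j _ => step j, Finset.sum_sub_distrib, hsucc]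
    simp only [Finset.sum_const, Finset.card_univ, Fintype.card_fin, nsmul_eq_mul]
    push_cast
    ring
  rw [hsum, ← mul_assoc, inv_mul_cancel₀ (by exact_mod_cast Nat.succ_ne_zero (m + 1)), one_mul]
end
end

section
/- Under the assumptions on R^E and R^H (antisymmetry, trace-freeness, and the first Bianchi identity), the following four trace identities hold for all free indices: (1) ∑_{E} R_{[A'B']E(AB)}{}^{E} = 0, where R_{A'B'EAB}{}^{E} denotes R^E(A',B'; E,A,B; E) (the contracted index E occupies the first unprimed slot and the superscript slot), [A'B'] denotes antisymmetrization over (A',B') and (AB) symmetrization over (A,B); (2) ∑_{E} R_{(A'B')E[AB]}{}^{E} = 0 (symmetrize (A',B'), antisymmetrize (A,B)); (3) ∑_{E'} R_{[AB]E'(A'B')}{}^{E'} = 0, where R_{ABE'A'B'}{}^{E'} denotes R^H(A,B; E',A',B'; E') (the contracted index E' occupies the first primed slot and the superscript slot); (4) ∑_{E'} R_{(AB)E'[A'B']}{}^{E'} = 0. -/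
noncomputable section

/-- Kronecker delta with values in `ℂ`. -/
def kdel {m : ℕ} (a b : Fin m) : ℂ := if a = b then 1 else 0

/-- Proposition A.1: the traces of the curvature components of a unimodular quaternionic
manifold vanish after antisymmetrizing one pair and symmetrizing the other pair of indices:
`R_{[A'B']E(AB)}{}^E = 0`, `R_{(A'B')E[AB]}{}^E = 0`, `R_{[AB]E'(A'B')}{}^{E'} = 0`,
`R_{(AB)E'[A'B']}{}^{E'} = 0`. -/
theorem curvature_trace_identities (n : ℕ) (hn : 1 ≤ n)
    (RE : Fin 2 → Fin 2 → Fin (2 * n) → Fin (2 * n) → Fin (2 * n) → Fin (2 * n) → ℂ)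
    (RH : Fin (2 * n) → Fin (2 * n) → Fin 2 → Fin 2 → Fin 2 → Fin 2 → ℂ)
    (hE : ∀ A' B' A B C D, RE A' B' A B C D = -RE B' A' B A C D)
    (hH : ∀ A B A' B' C' D', RH A B A' B' C' D' = -RH B A B' A' C' D')
    (htE : ∀ A' B' A B, ∑ C, RE A' B' A B C C = 0)
    (htH : ∀ A B A' B', ∑ C', RH A B A' B' C' C' = 0)
    (hBianchi : ∀ (A B C : Fin (2 * n)) (A' B' C' : Fin 2)
        (D : Fin (2 * n)) (D' : Fin 2),
      (RE A' B' A B C D * kdel C' D' + RH A B A' B' C' D' * kdel C D) +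
      (RE B' C' B C A D * kdel A' D' + RH B C B' C' A' D' * kdel A D) +
      (RE C' A' C A B D * kdel B' D' + RH C A C' A' B' D' * kdel B D) = 0) :
    (∀ (A' B' : Fin 2) (A B : Fin (2 * n)),
      (1 / 4 : ℂ) * ∑ E, ((RE A' B' E A B E - RE B' A' E A B E) +
        (RE A' B' E B A E - RE B' A' E B A E)) = 0) ∧
    (∀ (A' B' : Fin 2) (A B : Fin (2 * n)),
      (1 / 4 : ℂ) * ∑ E, ((RE A' B' E A B E + RE B' A' E A B E) -
        (RE A' B' E B A E + RE B' A' E B A E)) = 0) ∧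
    (∀ (A B : Fin (2 * n)) (A' B' : Fin 2),
      (1 / 4 : ℂ) * ∑ E', ((RH A B E' A' B' E' - RH B A E' A' B' E') +
        (RH A B E' B' A' E' - RH B A E' B' A' E')) = 0) ∧
    (∀ (A B : Fin (2 * n)) (A' B' : Fin 2),
      (1 / 4 : ℂ) * ∑ E', ((RH A B E' A' B' E' + RH B A E' A' B' E') -
        (RH A B E' B' A' E' + RH B A E' B' A' E')) = 0) := by
  -- antisymmetry for the "wrong slot" traces
  have convE : ∀ (p q : Fin 2) (u v : Fin (2*n)),
      ∑ C, RE p q u C v C = -∑ C, RE q p C u v C := by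
    intro p q u v
    rw [← Finset.sum_neg_distrib]
    exact Finset.sum_congr rfl fun C _ => hE p q u C v C
  have convH : ∀ (u v : Fin (2*n)) (p q : Fin 2),
      ∑ C', RH u v p C' q C' = -∑ C', RH v u C' p q C' := by
    intro u v p q
    rw [← Finset.sum_neg_distrib]
    exact Finset.sum_congr rfl fun C' _ => hH u v p C' q C'
  -- first contracted Bianchi identity (contraction over both index pairs)
  have lemI : ∀ (a b : Fin 2) (x y : Fin (2*n)),
      (∑ E, RE b a E x y E) - (∑ E, RE a b E y x E)
        + (∑ E', RH y x E' a b E') - (∑ E', RH x y E' b a E') = 0 := by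
    intro a b x y
    have S0 : ∑ C' : Fin 2, ∑ C, ((RE a b x y C C * kdel C' C' + RH x y a b C' C' * kdel C C)
        + (RE b C' y C x C * kdel a C' + RH y C b C' a C' * kdel x C)
        + (RE C' a C x y C * kdel b C' + RH C x C' a b C' * kdel y C)) = 0 :=
      Finset.sum_eq_zero fun C' _ => Finset.sum_eq_zero fun C _ => hBianchi x y C a b C' C C'
    simp only [Finset.sum_add_distrib] at S0
    have T1 : ∑ C' : Fin 2, ∑ C, RE a b x y C C * kdel C' C' = 0 := by
      simp [kdel, htE a b x y]
    have T2 : ∑ C' : Fin 2, ∑ C : Fin (2*n), RH x y a b C' C' * kdel C C = 0 := by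
      have h1 : ∀ C' : Fin 2, (∑ C : Fin (2*n), RH x y a b C' C' * kdel C C)
          = ((2*n : ℕ) : ℂ) * RH x y a b C' C' := by
        intro C'
        simp [kdel]
      rw [Finset.sum_congr rfl fun C' _ => h1 C', ← Finset.mul_sum, htH x y a b, mul_zero]
    have T3 : ∑ C' : Fin 2, ∑ C, RE b C' y C x C * kdel a C' = ∑ C, RE b a y C x C := by
      simp [kdel, mul_ite, Finset.sum_ite_eq]
    have T4 : ∑ C' : Fin 2, ∑ C, RH y C b C' a C' * kdel x C = ∑ C', RH y x b C' a C' := by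
      simp [kdel, mul_ite, Finset.sum_ite_eq]
    have T5 : ∑ C' : Fin 2, ∑ C, RE C' a C x y C * kdel b C' = ∑ C, RE b a C x y C := by
      simp [kdel, mul_ite, Finset.sum_ite_eq]
    have T6 : ∑ C' : Fin 2, ∑ C, RH C x C' a b C' * kdel y C = ∑ C', RH y x C' a b C' := by
      simp [kdel, mul_ite, Finset.sum_ite_eq]
    rw [T1, T2, T3, T4, T5, T6, convE b a y x, convH y x b a] at S0
    linear_combination S0
  -- second contracted Bianchi identity
  have lemE : ∀ (p q : Fin 2) (x y : Fin (2*n)),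
      (∑ E, RE p q E x y E) - 2 * (∑ E, RE p q E y x E)
        + (2*(n:ℂ)) * (∑ E', RH x y E' q p E') - (∑ E', RH x y E' p q E') = 0 := by
    intro p q x y
    have S0 : ∑ A' : Fin 2, ∑ C, ((RE A' q x y C C * kdel p A' + RH x y A' q p A' * kdel C C)
        + (RE q p y C x C * kdel A' A' + RH y C q p A' A' * kdel x C)
        + (RE p A' C x y C * kdel q A' + RH C x p A' q A' * kdel y C)) = 0 :=
      Finset.sum_eq_zero fun A' _ => Finset.sum_eq_zero fun C _ => hBianchi x y C A' q p C A'
    simp only [Finset.sum_add_distrib] at S0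
    have T1 : ∑ A' : Fin 2, ∑ C, RE A' q x y C C * kdel p A' = 0 := by
      simp [kdel, mul_ite, Finset.sum_ite_eq, htE p q x y]
    have T2 : ∑ A' : Fin 2, ∑ C : Fin (2*n), RH x y A' q p A' * kdel C C
        = (2*(n:ℂ)) * ∑ A', RH x y A' q p A' := by
      have h1 : ∀ A' : Fin 2, (∑ C : Fin (2*n), RH x y A' q p A' * kdel C C)
          = (2*(n:ℂ)) * RH x y A' q p A' := by
        intro A'
        simp [kdel]
      rw [Finset.sum_congr rfl fun A' _ => h1 A', ← Finset.mul_sum]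
    have T3 : ∑ A' : Fin 2, ∑ C, RE q p y C x C * kdel A' A' = 2 * ∑ C, RE q p y C x C := by
      simp [kdel]
    have T4 : ∑ A' : Fin 2, ∑ C, RH y C q p A' A' * kdel x C = 0 := by
      simp [kdel, mul_ite, Finset.sum_ite_eq, htH y x q p]
    have T5 : ∑ A' : Fin 2, ∑ C, RE p A' C x y C * kdel q A' = ∑ C, RE p q C x y C := by
      simp [kdel, mul_ite, Finset.sum_ite_eq]
    have T6 : ∑ A' : Fin 2, ∑ C, RH C x p A' q A' * kdel y C = ∑ A', RH y x p A' q A' := by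
      simp [kdel, mul_ite, Finset.sum_ite_eq]
    rw [T1, T2, T3, T4, T5, T6, convE q p y x, convH y x p q] at S0
    linear_combination S0
  have hne : (2*(n:ℂ) + 2) ≠ 0 := by
    have h2 : ((2*n+2 : ℕ) : ℂ) ≠ 0 := Nat.cast_ne_zero.mpr (by omega)
    push_cast at h2
    convert h2 using 2
  refine ⟨?_, ?_, ?_, ?_⟩
  · intro a b A B
    simp only [Finset.sum_add_distrib, Finset.sum_sub_distrib]
    have h0 : (2*(n:ℂ) + 2) * (((∑ E, RE a b E A B E) - (∑ E, RE b a E A B E))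
        + ((∑ E, RE a b E B A E) - (∑ E, RE b a E B A E))) = 0 := by
      linear_combination (-1 : ℂ) * lemE a b A B + lemE b a A B - lemE a b B A + lemE b a B A
        + (2*(n:ℂ)+1) * lemI b a A B - (2*(n:ℂ)+1) * lemI a b A B
    have := (mul_eq_zero.mp h0).resolve_left hne
    linear_combination (1/4 : ℂ) * this
  · intro a b A B
    simp only [Finset.sum_add_distrib, Finset.sum_sub_distrib]
    have h0 : (2*(n:ℂ) + 2) * (((∑ E, RE a b E A B E) + (∑ E, RE b a E A B E))
        - ((∑ E, RE a b E B A E) + (∑ E, RE b a E B A E))) = 0 := by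
      linear_combination lemE a b A B + lemE b a A B - lemE a b B A - lemE b a B A
        + (2*(n:ℂ)-1) * lemI b a A B + (2*(n:ℂ)-1) * lemI a b A B
    have := (mul_eq_zero.mp h0).resolve_left hne
    linear_combination (1/4 : ℂ) * this
  · intro A B a b
    simp only [Finset.sum_add_distrib, Finset.sum_sub_distrib]
    have h0 : (2*(n:ℂ) + 2) * (((∑ E', RH A B E' a b E') - (∑ E', RH B A E' a b E'))
        + ((∑ E', RH A B E' b a E') - (∑ E', RH B A E' b a E'))) = 0 := by
      linear_combination lemE a b A B + lemE b a A B - lemE a b B A - lemE b a B A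
        - 3 * lemI b a A B - 3 * lemI a b A B
    have := (mul_eq_zero.mp h0).resolve_left hne
    linear_combination (1/4 : ℂ) * this
  · intro A B a b
    simp only [Finset.sum_add_distrib, Finset.sum_sub_distrib]
    have h0 : (2*(n:ℂ) + 2) * (((∑ E', RH A B E' a b E') + (∑ E', RH B A E' a b E'))
        - ((∑ E', RH A B E' b a E') + (∑ E', RH B A E' b a E'))) = 0 := by
      linear_combination (-1 : ℂ) * lemE a b A B + lemE b a A B - lemE a b B A + lemE b a B A
        - lemI b a A B + lemI a b A B
    have := (mul_eq_zero.mp h0).resolve_left hne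
    linear_combination (1/4 : ℂ) * this
end
end
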